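/- arXiv:1806.03596 — 2 statements merged into one kernel-verified Lean document; each statement's English description precedes it below -/
import Mathlib

section
/- (W_j, Λ_j) is a gf-orthonormal basis for H with respect to {v_j} if and only if the induced sequence {u_{j,k} : j ∈ J, k ∈ K_j} is an orthonormal basis of H. -/
/-!
Put `T j := v j • π_{W j} ∘ (Λ j)† : H j → H`, so that `u j k = T j (e j k)` and, `v j` being
real, `(T j)† f = v j • Λ j (π_{W j} f)`. Condition (i) says `(T i)† ∘ T j` is the identity for
`i = j` and zero otherwise; both sides are continuous, so this may be checked on the Hilbert
bases `e`, where it is exactly the orthonormality of `u`. Since `⟪e j k, (T j)† f⟫ = ⟪u j k, f⟫`,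
condition (ii) is Parseval's identity for `u` summed first over `k`: it holds when `u` is a
Hilbert basis, and conversely it forces every `f` orthogonal to all `u j k` to vanish.
-/

open scoped InnerProductSpace
open ContinuousLinearMap

/-- The orthogonal projection of `H` onto the closed subspace `W j`, as a map `H →L[ℂ] H`. -/
noncomputable def gfProj {H : Type*} [NormedAddCommGroup H] [InnerProductSpace ℂ H]
    {J : Type*} (W : J → Submodule ℂ H) [∀ j, CompleteSpace (W j)] (j : J) : H →L[ℂ] H :=
  (W j).subtypeL.comp (W j).orthogonalProjectionOnto

namespace HilbertBasis

variable {ι 𝕜 E : Type*} [RCLike 𝕜] [NormedAddCommGroup E] [InnerProductSpace 𝕜 E]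

theorem hasSum_norm_inner_sq (b : HilbertBasis ι 𝕜 E) (x : E) :
    HasSum (fun i => ‖⟪b i, x⟫_𝕜‖ ^ 2) (‖x‖ ^ 2) := by
  simpa [b.repr_apply_apply] using lp.hasSum_norm (p := 2) (by norm_num) (b.repr x)

theorem eq_of_forall_inner_eq (b : HilbertBasis ι 𝕜 E) {x y : E}
    (h : ∀ i, ⟪b i, x⟫_𝕜 = ⟪b i, y⟫_𝕜) : x = y :=
  b.repr.injective <| lp.ext <| funext fun i => by simpa [b.repr_apply_apply] using h i

theorem continuousLinearMap_ext_inner {ι' F : Type*} [NormedAddCommGroup F]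
    [InnerProductSpace 𝕜 F] (b : HilbertBasis ι 𝕜 E) (b' : HilbertBasis ι' 𝕜 F)
    {A B : F →L[𝕜] E} (h : ∀ i i', ⟪b i, A (b' i')⟫_𝕜 = ⟪b i, B (b' i')⟫_𝕜) : A = B :=
  ext_on (Submodule.dense_iff_topologicalClosure_eq_top.2 b'.dense_span) <| by
    rintro _ ⟨i', rfl⟩
    exact b.eq_of_forall_inner_eq fun i => h i i'

end HilbertBasis

section SynthesisOperators

variable {𝕜 H J : Type*} [RCLike 𝕜] [NormedAddCommGroup H] [InnerProductSpace 𝕜 H]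
  {Hs K : J → Type*} [∀ j, NormedAddCommGroup (Hs j)] [∀ j, InnerProductSpace 𝕜 (Hs j)]
  (e : ∀ j, HilbertBasis (K j) 𝕜 (Hs j)) (T : ∀ j, Hs j →L[𝕜] H)

theorem orthonormal_sigma_of_inner_map_map
    (hinner : ∀ j (g g' : Hs j), ⟪T j g, T j g'⟫_𝕜 = ⟪g, g'⟫_𝕜)
    (horth : ∀ i j, i ≠ j → ∀ (gi : Hs i) (gj : Hs j), ⟪T i gi, T j gj⟫_𝕜 = 0) :
    Orthonormal 𝕜 (fun p : Σ j, K j => T p.1 (e p.1 p.2)) := by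
  classical
  rw [orthonormal_iff_ite]
  rintro ⟨i, k⟩ ⟨j, k'⟩
  obtain rfl | hij := eq_or_ne i j
  · simp [hinner, orthonormal_iff_ite.1 (e i).orthonormal]
  · simp [horth i j hij, hij]

variable [CompleteSpace H] [∀ j, CompleteSpace (Hs j)]

theorem span_sigma_topologicalClosure_eq_top_of_hasSum
    (hsum : ∀ f, HasSum (fun j => ‖adjoint (T j) f‖ ^ 2) (‖f‖ ^ 2)) :
    (Submodule.span 𝕜 (Set.range fun p : Σ j, K j => T p.1 (e p.1 p.2))).topologicalClosure
      = ⊤ := by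
  rw [Submodule.topologicalClosure_eq_top_iff, Submodule.eq_bot_iff]
  intro f hf
  have hadj : ∀ j, adjoint (T j) f = 0 := fun j =>
    (e j).eq_of_forall_inner_eq fun k => by
      rw [adjoint_inner_right, inner_zero_right]
      exact (Submodule.mem_orthogonal _ f).1 hf _ (Submodule.subset_span ⟨⟨j, k⟩, rfl⟩)
  have hsum_f := hsum f
  simp only [hadj, norm_zero, zero_pow two_ne_zero] at hsum_f
  simpa using (hasSum_zero.unique hsum_f).symm

variable {e T}

theorem inner_map_map_of_orthonormal_sigma
    (hon : Orthonormal 𝕜 (fun p : Σ j, K j => T p.1 (e p.1 p.2))) (j : J) (g g' : Hs j) :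
    ⟪T j g, T j g'⟫_𝕜 = ⟪g, g'⟫_𝕜 := by
  classical
  suffices adjoint (T j) ∘L T j = .id 𝕜 (Hs j) by
    rw [← adjoint_inner_right, ← comp_apply, this, id_apply]
  refine (e j).continuousLinearMap_ext_inner (e j) fun k k' => ?_
  rw [comp_apply, adjoint_inner_right, id_apply]
  simpa [orthonormal_iff_ite.1 (e j).orthonormal] using orthonormal_iff_ite.1 hon ⟨j, k⟩ ⟨j, k'⟩

theorem inner_map_map_eq_zero_of_orthonormal_sigma
    (hon : Orthonormal 𝕜 (fun p : Σ j, K j => T p.1 (e p.1 p.2))) {i j : J} (hij : i ≠ j)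
    (gi : Hs i) (gj : Hs j) : ⟪T i gi, T j gj⟫_𝕜 = 0 := by
  classical
  suffices adjoint (T i) ∘L T j = 0 by
    rw [← adjoint_inner_right, ← comp_apply, this, zero_apply, inner_zero_right]
  refine (e i).continuousLinearMap_ext_inner (e j) fun k k' => ?_
  rw [comp_apply, adjoint_inner_right, zero_apply, inner_zero_right]
  simpa [hij] using orthonormal_iff_ite.1 hon ⟨i, k⟩ ⟨j, k'⟩

theorem hasSum_norm_adjoint_sq_of_orthonormal_sigma
    (hon : Orthonormal 𝕜 (fun p : Σ j, K j => T p.1 (e p.1 p.2)))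
    (hsp : (Submodule.span 𝕜 (Set.range fun p : Σ j, K j => T p.1 (e p.1 p.2))).topologicalClosure
      = ⊤) (f : H) :
    HasSum (fun j => ‖adjoint (T j) f‖ ^ 2) (‖f‖ ^ 2) := by
  let b : HilbertBasis (Σ j, K j) 𝕜 H := .mk hon hsp.ge
  refine (b.hasSum_norm_inner_sq f).sigma fun j => ?_
  simpa [b, adjoint_inner_right] using (e j).hasSum_norm_inner_sq (adjoint (T j) f)

variable (e T) in
theorem inner_map_map_and_hasSum_norm_adjoint_sq_iff :
    ((∀ j (g g' : Hs j), ⟪T j g, T j g'⟫_𝕜 = ⟪g, g'⟫_𝕜) ∧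
      (∀ i j, i ≠ j → ∀ (gi : Hs i) (gj : Hs j), ⟪T i gi, T j gj⟫_𝕜 = 0) ∧
      (∀ f, HasSum (fun j => ‖adjoint (T j) f‖ ^ 2) (‖f‖ ^ 2))) ↔
    (Orthonormal 𝕜 (fun p : Σ j, K j => T p.1 (e p.1 p.2)) ∧
      (Submodule.span 𝕜 (Set.range fun p : Σ j, K j => T p.1 (e p.1 p.2))).topologicalClosure
        = ⊤) := by
  constructor
  · rintro ⟨hinner, horth, hsum⟩
    exact ⟨orthonormal_sigma_of_inner_map_map e T hinner horth,
      span_sigma_topologicalClosure_eq_top_of_hasSum e T hsum⟩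
  · rintro ⟨hon, hsp⟩
    exact ⟨inner_map_map_of_orthonormal_sigma hon,
      fun _ _ => inner_map_map_eq_zero_of_orthonormal_sigma hon,
      hasSum_norm_adjoint_sq_of_orthonormal_sigma hon hsp⟩

end SynthesisOperators

theorem adjoint_gfProj {H J : Type*} [NormedAddCommGroup H] [InnerProductSpace ℂ H]
    [CompleteSpace H] (W : J → Submodule ℂ H) [∀ j, CompleteSpace (W j)] (j : J) :
    adjoint (gfProj W j) = gfProj W j := by
  rw [gfProj, adjoint_comp, Submodule.adjoint_subtypeL, Submodule.adjoint_orthogonalProjectionOnto]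

theorem gf_orthonormal_basis_iff_induced_orthonormal_basis_general
    {H : Type*} [NormedAddCommGroup H] [InnerProductSpace ℂ H] [CompleteSpace H]
    {J : Type*}
    {Hs : J → Type*} [∀ j, NormedAddCommGroup (Hs j)] [∀ j, InnerProductSpace ℂ (Hs j)]
    [∀ j, CompleteSpace (Hs j)]
    (W : J → Submodule ℂ H) [∀ j, CompleteSpace (W j)]
    (v : J → ℝ)
    (Λ : ∀ j, H →L[ℂ] Hs j)
    (K : J → Type*)
    (e : ∀ j, HilbertBasis (K j) ℂ (Hs j))
    (u : ∀ j, K j → H)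
    (hu : ∀ j k, u j k = v j • gfProj W j (adjoint (Λ j) (e j k))) :
    ((∀ j (g g' : Hs j),
        ⟪v j • gfProj W j (adjoint (Λ j) g), v j • gfProj W j (adjoint (Λ j) g')⟫_ℂ
          = ⟪g, g'⟫_ℂ) ∧
     (∀ i j, i ≠ j → ∀ (gi : Hs i) (gj : Hs j),
        ⟪v i • gfProj W i (adjoint (Λ i) gi), v j • gfProj W j (adjoint (Λ j) gj)⟫_ℂ = 0) ∧
     (∀ f : H, HasSum (fun j => (v j) ^ 2 * ‖Λ j (gfProj W j f)‖ ^ 2) (‖f‖ ^ 2)))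
      ↔
    (Orthonormal ℂ (fun p : Σ j, K j => u p.1 p.2) ∧
     (Submodule.span ℂ (Set.range fun p : Σ j, K j => u p.1 p.2)).topologicalClosure = ⊤) := by
  let T : ∀ j, Hs j →L[ℂ] H := fun j => (v j : ℂ) • (gfProj W j ∘L adjoint (Λ j))
  have hT : ∀ j g, T j g = v j • gfProj W j (adjoint (Λ j) g) := fun j g =>
    (RCLike.real_smul_eq_coe_smul _ _).symm
  have hT_adjoint : ∀ j f, ‖adjoint (T j) f‖ ^ 2 = v j ^ 2 * ‖Λ j (gfProj W j f)‖ ^ 2 := by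
    intro j f
    have hadj : adjoint (T j) = (v j : ℂ) • (Λ j ∘L gfProj W j) := by
      simp only [T, LinearIsometryEquiv.map_smulₛₗ, adjoint_comp, adjoint_adjoint, adjoint_gfProj,
        Complex.conj_ofReal]
    rw [hadj, smul_apply, norm_smul, mul_pow, Complex.norm_real, Real.norm_eq_abs, sq_abs,
      comp_apply]
  obtain rfl : u = fun j k => T j (e j k) := funext₂ fun j k => (hu j k).trans (hT j _).symm
  simp only [← hT, ← hT_adjoint]
  exact inner_map_map_and_hasSum_norm_adjoint_sq_iff e T

/-- `(W_j, Λ_j)` is a gf-orthonormal basis for `H` w.r.t. `{v_j}` iff the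
induced sequence `{u_{j,k}}` is an orthonormal basis of `H` (an orthonormal family whose
closed linear span is `H`). -/
theorem gf_orthonormal_basis_iff_induced_orthonormal_basis
    {H : Type*} [NormedAddCommGroup H] [InnerProductSpace ℂ H] [CompleteSpace H]
    {J : Type*} [Countable J]
    {Hs : J → Type*} [∀ j, NormedAddCommGroup (Hs j)] [∀ j, InnerProductSpace ℂ (Hs j)]
    [∀ j, CompleteSpace (Hs j)]
    (W : J → Submodule ℂ H) [∀ j, CompleteSpace (W j)]
    (v : J → ℝ) (hv : ∀ j, 0 < v j)
    (Λ : ∀ j, H →L[ℂ] Hs j)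
    (K : J → Type*) [∀ j, Countable (K j)]
    (e : ∀ j, HilbertBasis (K j) ℂ (Hs j))
    (u : ∀ j, K j → H)
    (hu : ∀ j k, u j k = v j • gfProj W j (adjoint (Λ j) (e j k))) :
    ((∀ j (g g' : Hs j),
        ⟪v j • gfProj W j (adjoint (Λ j) g), v j • gfProj W j (adjoint (Λ j) g')⟫_ℂ
          = ⟪g, g'⟫_ℂ) ∧
     (∀ i j, i ≠ j → ∀ (gi : Hs i) (gj : Hs j),
        ⟪v i • gfProj W i (adjoint (Λ i) gi), v j • gfProj W j (adjoint (Λ j) gj)⟫_ℂ = 0) ∧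
     (∀ f : H, HasSum (fun j => (v j) ^ 2 * ‖Λ j (gfProj W j f)‖ ^ 2) (‖f‖ ^ 2)))
      ↔
    (Orthonormal ℂ (fun p : Σ j, K j => u p.1 p.2) ∧
     (Submodule.span ℂ (Set.range fun p : Σ j, K j => u p.1 p.2)).topologicalClosure = ⊤) :=
  gf_orthonormal_basis_iff_induced_orthonormal_basis_general W v Λ K e u hu
end

section
/- Let Λ = (W_j, Λ_j, v_j) be a g-fusion frame for H with bounds A, B, let Θ_j : H → H_j be bounded linear operators, and let λ, μ, γ ≥ 0 satisfy max{λ + γ/√A, μ} < 1. Suppose that for every finite subset I ⊆ J and every f ∈ H: ‖Σ_{j∈I} v_j² (π_{W_j}Λ_j*Λ_jπ_{W_j} f − π_{W_j}Θ_j*Θ_jπ_{W_j} f)‖ ≤ λ‖Σ_{j∈I} v_j² π_{W_j}Λ_j*Λ_jπ_{W_j} f‖ + μ‖Σ_{j∈I} v_j² π_{W_j}Θ_j*Θ_jπ_{W_j} f‖ + γ(Σ_{j∈I} v_j² ‖Λ_jπ_{W_j} f‖²)^{1/2}. Then Θ = (W_j, Θ_j, v_j) is a g-fusion frame for H with bounds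 A·(1 − (λ + γ/√A))/(1 + μ) and B·(1 + λ + γ/√B)/(1 − μ). -/
open scoped InnerProductSpace
open ContinuousLinearMap

/-!
A g-fusion frame `(W_j, Λ_j, v_j)` is the g-frame `(v_j Λ_j π_{W_j})_j`, so it suffices to perturb
g-frames `L`. Their frame operator is `S_L = U_L* U_L`, where `U_L f = (L_j f)_j ∈ ℓ²(J, H_j)` is
the analysis operator. On finite partial sums the perturbation inequality gives
`(1 - μ)‖S_K f‖ ≤ (1 + λ)‖S_L f‖ + γ (∑ ‖L_j f‖²)^{1/2} ≤ B (1 + λ + γ/√B) ‖f‖`, so `K` is Bessel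
with the claimed upper bound. Passing to the limit and using `√A ‖U_L f‖ ≤ ‖S_L f‖` and
`A ‖f‖ ≤ ‖S_L f‖` yields `a ‖f‖ ≤ ‖S_K f‖` for the claimed lower bound `a`. Then `S_K` is onto,
and writing `f = S_K g`, Cauchy–Schwarz for `⟪U_K g, U_K f⟫` upgrades this to `a ‖f‖² ≤ ‖U_K f‖²`.
-/

namespace Real

theorem sqrt_mul_sq (a : ℝ) {x : ℝ} (hx : 0 ≤ x) : √(a * x ^ 2) = √a * x := by
  rw [sqrt_mul' _ (sq_nonneg x), sqrt_sq hx]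

theorem sqrt_mul_le_of_mul_sq_le_sq {a x y : ℝ} (hx : 0 ≤ x) (hy : 0 ≤ y)
    (h : a * x ^ 2 ≤ y ^ 2) : √a * x ≤ y :=
  (sqrt_mul_sq a hx).symm.trans_le ((sqrt_le_sqrt h).trans_eq (sqrt_sq hy))

end Real

theorem norm_sub_le_of_hasSum {ι H : Type*} [NormedAddCommGroup H] {x y : ι → H} {r : ι → ℝ}
    {X Y : H} {R lam mu gam : ℝ} (hx : HasSum x X) (hy : HasSum y Y) (hr : HasSum r R)
    (h : ∀ s : Finset ι, ‖∑ i ∈ s, (x i - y i)‖ ≤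
      lam * ‖∑ i ∈ s, x i‖ + mu * ‖∑ i ∈ s, y i‖ + gam * √(∑ i ∈ s, r i)) :
    ‖X - Y‖ ≤ lam * ‖X‖ + mu * ‖Y‖ + gam * √R :=
  le_of_tendsto_of_tendsto' (hx.sub hy).norm
    (((hx.norm.const_mul lam).add (hy.norm.const_mul mu)).add (hr.sqrt.const_mul gam)) h

theorem lp.norm_sq_eq_tsum {ι : Type*} {E : ι → Type*} [∀ i, NormedAddCommGroup (E i)]
    (g : lp E 2) : ‖g‖ ^ 2 = ∑' i, ‖g i‖ ^ 2 := by
  simpa using lp.norm_rpow_eq_tsum (by norm_num) g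

section AdjointCompSelf

variable {𝕜 H F : Type*} [RCLike 𝕜] [NormedAddCommGroup H] [InnerProductSpace 𝕜 H]
  [NormedAddCommGroup F] [InnerProductSpace 𝕜 F] [CompleteSpace H] [CompleteSpace F]

theorem re_inner_adjoint_apply_self (U : H →L[𝕜] F) (f : H) :
    RCLike.re ⟪adjoint U (U f), f⟫_𝕜 = ‖U f‖ ^ 2 := by
  rw [apply_norm_sq_eq_inner_adjoint_left, comp_apply]

theorem sqrt_mul_norm_le_norm_adjoint_apply {U : H →L[𝕜] F} {A : ℝ}
    (hA : ∀ f, A * ‖f‖ ^ 2 ≤ ‖U f‖ ^ 2) (f : H) : √A * ‖U f‖ ≤ ‖adjoint U (U f)‖ := by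
  have hlow : √A * ‖f‖ ≤ ‖U f‖ :=
    Real.sqrt_mul_le_of_mul_sq_le_sq (norm_nonneg f) (norm_nonneg _) (hA f)
  have hsq : ‖U f‖ ^ 2 ≤ ‖adjoint U (U f)‖ * ‖f‖ := by
    rw [← re_inner_adjoint_apply_self]
    exact re_inner_le_norm _ _
  rcases (norm_nonneg (U f)).eq_or_lt with h0 | hpos
  · rw [← h0, mul_zero]
    exact norm_nonneg _
  refine le_of_mul_le_mul_left ?_ hpos
  calc ‖U f‖ * (√A * ‖U f‖) = √A * ‖U f‖ ^ 2 := by ring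
    _ ≤ √A * (‖adjoint U (U f)‖ * ‖f‖) := by gcongr
    _ = ‖adjoint U (U f)‖ * (√A * ‖f‖) := by ring
    _ ≤ ‖adjoint U (U f)‖ * ‖U f‖ := by gcongr
    _ = ‖U f‖ * ‖adjoint U (U f)‖ := by ring

theorem surjective_adjoint_comp_self {U : H →L[𝕜] F} {a : ℝ} (ha : 0 < a)
    (h : ∀ f, a * ‖f‖ ≤ ‖adjoint U (U f)‖) : Function.Surjective (adjoint U ∘L U) := by
  have hanti : AntilipschitzWith (Real.toNNReal a⁻¹) (adjoint U ∘L U) :=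
    (adjoint U ∘L U).antilipschitz_of_bound fun f => by
      rw [Real.coe_toNNReal _ (by positivity), comp_apply, inv_mul_eq_div, le_div_iff₀ ha,
        mul_comm]
      exact h f
  refine ((bijective_iff_dense_range_and_antilipschitz _).mpr ⟨?_, _, hanti⟩).surjective
  rw [Submodule.topologicalClosure_eq_top_iff, Submodule.eq_bot_iff]
  intro x hx
  have horth : ⟪(adjoint U ∘L U) x, x⟫_𝕜 = 0 :=
    Submodule.inner_right_of_mem_orthogonal (LinearMap.mem_range_self _ x) hx
  have hUx : U x = 0 := by
    rw [← norm_eq_zero, ← sq_eq_zero_iff, ← re_inner_adjoint_apply_self, ← comp_apply, horth,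
      map_zero]
  have hax : a * ‖x‖ ≤ 0 := by simpa [hUx] using h x
  exact norm_le_zero_iff.mp (nonpos_of_mul_nonpos_right hax ha)

theorem mul_norm_sq_le_norm_apply_sq {U : H →L[𝕜] F} {a : ℝ} (ha : 0 < a)
    (h : ∀ f, a * ‖f‖ ≤ ‖adjoint U (U f)‖) (f : H) : a * ‖f‖ ^ 2 ≤ ‖U f‖ ^ 2 := by
  obtain ⟨g, hgf⟩ := surjective_adjoint_comp_self ha h f
  rw [comp_apply] at hgf
  have hf : ‖f‖ ^ 2 ≤ ‖U g‖ * ‖U f‖ :=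
    calc ‖f‖ ^ 2 = RCLike.re ⟪adjoint U (U g), f⟫_𝕜 := by rw [hgf, inner_self_eq_norm_sq]
      _ = RCLike.re ⟪U g, U f⟫_𝕜 := by rw [adjoint_inner_left]
      _ ≤ ‖U g‖ * ‖U f‖ := re_inner_le_norm _ _
  have hg : ‖U g‖ ^ 2 ≤ ‖f‖ * ‖g‖ := by
    rw [← re_inner_adjoint_apply_self, ← hgf]
    exact re_inner_le_norm _ _
  rcases (norm_nonneg f).eq_or_lt with h0 | hpos
  · rw [← h0]
    simp
  refine le_of_mul_le_mul_left ?_ (pow_pos hpos 2)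
  calc ‖f‖ ^ 2 * (a * ‖f‖ ^ 2) = a * (‖f‖ ^ 2) ^ 2 := by ring
    _ ≤ a * (‖U g‖ * ‖U f‖) ^ 2 := by gcongr
    _ = a * ‖U g‖ ^ 2 * ‖U f‖ ^ 2 := by ring
    _ ≤ a * (‖f‖ * ‖g‖) * ‖U f‖ ^ 2 := by gcongr
    _ = ‖f‖ * (a * ‖g‖) * ‖U f‖ ^ 2 := by ring
    _ ≤ ‖f‖ * ‖f‖ * ‖U f‖ ^ 2 := by gcongr; exact hgf ▸ h g
    _ = ‖f‖ ^ 2 * ‖U f‖ ^ 2 := by ring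

end AdjointCompSelf

section GFrame

variable {𝕜 H ι : Type*} {E : ι → Type*} [RCLike 𝕜] [NormedAddCommGroup H]
  [InnerProductSpace 𝕜 H] [∀ i, NormedAddCommGroup (E i)] [∀ i, InnerProductSpace 𝕜 (E i)]

def IsGBessel (L : ∀ i, H →L[𝕜] E i) (C : ℝ) : Prop :=
  ∀ (s : Finset ι) (f : H), ∑ i ∈ s, ‖L i f‖ ^ 2 ≤ C * ‖f‖ ^ 2

def IsGFrame (L : ∀ i, H →L[𝕜] E i) (A B : ℝ) : Prop :=
  ∀ f : H, Summable (fun i => ‖L i f‖ ^ 2) ∧ A * ‖f‖ ^ 2 ≤ ∑' i, ‖L i f‖ ^ 2 ∧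
    ∑' i, ‖L i f‖ ^ 2 ≤ B * ‖f‖ ^ 2

theorem IsGFrame.isGBessel {L : ∀ i, H →L[𝕜] E i} {A B : ℝ} (hL : IsGFrame L A B) :
    IsGBessel L B := fun s f =>
  ((hL f).1.sum_le_tsum s fun _ _ => by positivity).trans (hL f).2.2

theorem isGBessel_of_norm_sum_adjoint_apply_le [CompleteSpace H] [∀ i, CompleteSpace (E i)]
    {L : ∀ i, H →L[𝕜] E i} {C : ℝ}
    (h : ∀ (s : Finset ι) (f : H), ‖∑ i ∈ s, adjoint (L i) (L i f)‖ ≤ C * ‖f‖) :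
    IsGBessel L C := fun s f =>
  calc ∑ i ∈ s, ‖L i f‖ ^ 2 = RCLike.re ⟪∑ i ∈ s, adjoint (L i) (L i f), f⟫_𝕜 := by
        simp [sum_inner, re_inner_adjoint_apply_self]
    _ ≤ ‖∑ i ∈ s, adjoint (L i) (L i f)‖ * ‖f‖ := re_inner_le_norm _ _
    _ ≤ C * ‖f‖ * ‖f‖ := by gcongr; exact h s f
    _ = C * ‖f‖ ^ 2 := by ring

namespace IsGBessel

variable {L : ∀ i, H →L[𝕜] E i} {C : ℝ}

theorem summable (hL : IsGBessel L C) (f : H) : Summable fun i => ‖L i f‖ ^ 2 :=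
  summable_of_sum_le (fun _ => by positivity) (hL · f)

theorem tsum_le (hL : IsGBessel L C) (f : H) : ∑' i, ‖L i f‖ ^ 2 ≤ C * ‖f‖ ^ 2 :=
  Real.tsum_le_of_sum_le (fun _ => by positivity) (hL · f)

theorem memℓp (hL : IsGBessel L C) (f : H) : Memℓp (fun i => L i f) 2 :=
  memℓp_gen (by simpa using hL.summable f)

noncomputable def analysisOp (hL : IsGBessel L C) : H →L[𝕜] lp E 2 :=
  LinearMap.mkContinuous
    { toFun := fun f => ⟨fun i => L i f, hL.memℓp f⟩
      map_add' := fun f g => by ext; simp; rfl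
      map_smul' := fun c f => by ext; simp [Pi.smul_apply] }
    √C fun f =>
      calc ‖(⟨fun i => L i f, hL.memℓp f⟩ : lp E 2)‖ = √(∑' i, ‖L i f‖ ^ 2) := by
            rw [← Real.sqrt_sq (norm_nonneg _), lp.norm_sq_eq_tsum]
        _ ≤ √(C * ‖f‖ ^ 2) := Real.sqrt_le_sqrt (hL.tsum_le f)
        _ = √C * ‖f‖ := Real.sqrt_mul_sq C (norm_nonneg f)

@[simp]
theorem analysisOp_apply (hL : IsGBessel L C) (f : H) (i : ι) : hL.analysisOp f i = L i f := rfl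

theorem norm_analysisOp_apply_sq (hL : IsGBessel L C) (f : H) :
    ‖hL.analysisOp f‖ ^ 2 = ∑' i, ‖L i f‖ ^ 2 := by
  simp [lp.norm_sq_eq_tsum]

theorem norm_analysisOp_le (hL : IsGBessel L C) : ‖hL.analysisOp‖ ≤ √C :=
  LinearMap.mkContinuous_norm_le _ (Real.sqrt_nonneg C) _

variable [CompleteSpace H] [∀ i, CompleteSpace (E i)]

theorem adjoint_analysisOp_single [DecidableEq ι] (hL : IsGBessel L C) (i : ι) (y : E i) :
    adjoint hL.analysisOp (lp.single 2 i y) = adjoint (L i) y :=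
  ext_inner_right 𝕜 fun x => by
    rw [adjoint_inner_left, adjoint_inner_left, lp.inner_single_left, analysisOp_apply]

theorem adjoint_analysisOp_sum_single [DecidableEq ι] (hL : IsGBessel L C) (s : Finset ι)
    (f : H) :
    adjoint hL.analysisOp (∑ i ∈ s, lp.single 2 i (L i f)) = ∑ i ∈ s, adjoint (L i) (L i f) := by
  simp [map_sum, adjoint_analysisOp_single]

theorem hasSum_adjoint_apply (hL : IsGBessel L C) (f : H) :
    HasSum (fun i => adjoint (L i) (L i f)) (adjoint hL.analysisOp (hL.analysisOp f)) := by
  classical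
  simpa [adjoint_analysisOp_single] using
    (lp.hasSum_single ENNReal.ofNat_ne_top (hL.analysisOp f)).mapL (adjoint hL.analysisOp)

theorem norm_sum_adjoint_apply_le (hL : IsGBessel L C) (s : Finset ι) (f : H) :
    ‖∑ i ∈ s, adjoint (L i) (L i f)‖ ≤ √C * √(∑ i ∈ s, ‖L i f‖ ^ 2) := by
  classical
  have hnorm : ‖∑ i ∈ s, lp.single 2 i (L i f)‖ = √(∑ i ∈ s, ‖L i f‖ ^ 2) := by
    rw [← Real.sqrt_sq (norm_nonneg _)]
    simpa using congrArg Real.sqrt (lp.norm_sum_single (E := E) (p := 2) (by norm_num) _ s)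
  rw [← hL.adjoint_analysisOp_sum_single, ← hnorm]
  calc _ ≤ ‖adjoint hL.analysisOp‖ * ‖∑ i ∈ s, lp.single 2 i (L i f)‖ := le_opNorm _ _
    _ ≤ √C * ‖∑ i ∈ s, lp.single 2 i (L i f)‖ := by
        rw [LinearIsometryEquiv.norm_map]
        gcongr
        exact hL.norm_analysisOp_le

end IsGBessel

end GFrame

section Perturbation

variable {𝕜 H ι : Type*} {E : ι → Type*} [RCLike 𝕜] [NormedAddCommGroup H]
  [InnerProductSpace 𝕜 H] [∀ i, NormedAddCommGroup (E i)] [∀ i, InnerProductSpace 𝕜 (E i)]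
  [CompleteSpace H] [∀ i, CompleteSpace (E i)] {L K : ∀ i, H →L[𝕜] E i} {lam mu gam : ℝ}

theorem IsGBessel.of_perturbation {B : ℝ} (hL : IsGBessel L B) (hB : 0 < B) (hlam : 0 ≤ lam)
    (hgam : 0 ≤ gam) (hmu : mu < 1)
    (hpert : ∀ (s : Finset ι) (f : H),
      ‖∑ i ∈ s, (adjoint (L i) (L i f) - adjoint (K i) (K i f))‖ ≤
        lam * ‖∑ i ∈ s, adjoint (L i) (L i f)‖ + mu * ‖∑ i ∈ s, adjoint (K i) (K i f)‖ +
          gam * √(∑ i ∈ s, ‖L i f‖ ^ 2)) :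
    IsGBessel K (B * ((1 + lam + gam / √B) / (1 - mu))) := by
  refine isGBessel_of_norm_sum_adjoint_apply_le fun s f => ?_
  have hpert := hpert s f
  rw [Finset.sum_sub_distrib] at hpert
  set SL := ∑ i ∈ s, adjoint (L i) (L i f)
  set SK := ∑ i ∈ s, adjoint (K i) (K i f)
  set q := √(∑ i ∈ s, ‖L i f‖ ^ 2)
  have hSL : ‖SL‖ ≤ √B * q := hL.norm_sum_adjoint_apply_le s f
  have hq : q ≤ √B * ‖f‖ :=
    (Real.sqrt_le_sqrt (hL s f)).trans_eq (Real.sqrt_mul_sq B (norm_nonneg f))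
  have hSK : (1 - mu) * ‖SK‖ ≤ ((1 + lam) * √B + gam) * q := by
    have htri : ‖SK‖ ≤ ‖SL‖ + ‖SL - SK‖ := norm_le_norm_add_norm_sub SL SK
    have : (1 + lam) * ‖SL‖ ≤ (1 + lam) * (√B * q) := by gcongr
    linarith
  have hconst : ((1 + lam) * √B + gam) * √B = B * (1 + lam + gam / √B) := by
    have hsB : 0 < √B := Real.sqrt_pos.mpr hB
    field_simp
    rw [Real.sq_sqrt hB.le]
  rw [← mul_div_assoc, div_mul_eq_mul_div, le_div_iff₀ (by linarith), ← hconst, mul_comm]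
  calc (1 - mu) * ‖SK‖ ≤ ((1 + lam) * √B + gam) * q := hSK
    _ ≤ ((1 + lam) * √B + gam) * (√B * ‖f‖) := by gcongr
    _ = _ := by ring

theorem mul_norm_le_norm_adjoint_apply_of_perturbation {F G : Type*} [NormedAddCommGroup F]
    [InnerProductSpace 𝕜 F] [CompleteSpace F] [NormedAddCommGroup G] [InnerProductSpace 𝕜 G]
    [CompleteSpace G] {U : H →L[𝕜] F} {V : H →L[𝕜] G} {A : ℝ} (hA : 0 < A)
    (hU : ∀ f, A * ‖f‖ ^ 2 ≤ ‖U f‖ ^ 2) (hmu : 0 ≤ mu) (hgam : 0 ≤ gam)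
    (hmax : lam + gam / √A < 1)
    (hpert : ∀ f, ‖adjoint U (U f) - adjoint V (V f)‖ ≤
      lam * ‖adjoint U (U f)‖ + mu * ‖adjoint V (V f)‖ + gam * ‖U f‖) (f : H) :
    A * ((1 - (lam + gam / √A)) / (1 + mu)) * ‖f‖ ≤ ‖adjoint V (V f)‖ := by
  have hsA : 0 < √A := Real.sqrt_pos.mpr hA
  set SU := adjoint U (U f)
  set SV := adjoint V (V f)
  have hUSU : √A * ‖U f‖ ≤ ‖SU‖ := sqrt_mul_norm_le_norm_adjoint_apply hU f
  have hfSU : A * ‖f‖ ≤ ‖SU‖ :=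
    calc A * ‖f‖ = √A * (√A * ‖f‖) := by rw [← mul_assoc, Real.mul_self_sqrt hA.le]
      _ ≤ √A * ‖U f‖ := by
          gcongr
          exact Real.sqrt_mul_le_of_mul_sq_le_sq (norm_nonneg f) (norm_nonneg _) (hU f)
      _ ≤ ‖SU‖ := hUSU
  have hgamU : gam * ‖U f‖ ≤ gam / √A * ‖SU‖ :=
    calc gam * ‖U f‖ = gam / √A * (√A * ‖U f‖) := by field_simp
      _ ≤ gam / √A * ‖SU‖ := by gcongr
  have htri : ‖SU‖ ≤ ‖SV‖ + ‖SU - SV‖ := norm_le_norm_add_norm_sub' SU SV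
  have hkey : (1 - (lam + gam / √A)) * ‖SU‖ ≤ (1 + mu) * ‖SV‖ := by
    linarith [hpert f]
  calc A * ((1 - (lam + gam / √A)) / (1 + mu)) * ‖f‖
        = (1 - (lam + gam / √A)) * (A * ‖f‖) / (1 + mu) := by ring
    _ ≤ (1 - (lam + gam / √A)) * ‖SU‖ / (1 + mu) := by gcongr
    _ ≤ ‖SV‖ := by rw [div_le_iff₀ (by linarith)]; linarith

theorem IsGFrame.of_perturbation {A B : ℝ} (hL : IsGFrame L A B) (hA : 0 < A) (hAB : A ≤ B)
    (hlam : 0 ≤ lam) (hmu : 0 ≤ mu) (hgam : 0 ≤ gam) (hmax : lam + gam / √A < 1 ∧ mu < 1)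
    (hpert : ∀ (s : Finset ι) (f : H),
      ‖∑ i ∈ s, (adjoint (L i) (L i f) - adjoint (K i) (K i f))‖ ≤
        lam * ‖∑ i ∈ s, adjoint (L i) (L i f)‖ + mu * ‖∑ i ∈ s, adjoint (K i) (K i f)‖ +
          gam * √(∑ i ∈ s, ‖L i f‖ ^ 2)) :
    IsGFrame K (A * ((1 - (lam + gam / √A)) / (1 + mu)))
      (B * ((1 + lam + gam / √B) / (1 - mu))) := by
  have hLB := hL.isGBessel
  have hKB := hLB.of_perturbation (hA.trans_le hAB) hlam hgam hmax.2 hpert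
  set UL := hLB.analysisOp
  set UK := hKB.analysisOp
  have hUL : ∀ f, A * ‖f‖ ^ 2 ≤ ‖UL f‖ ^ 2 := fun f => by
    rw [hLB.norm_analysisOp_apply_sq]
    exact (hL f).2.1
  have hlim : ∀ f, ‖adjoint UL (UL f) - adjoint UK (UK f)‖ ≤
      lam * ‖adjoint UL (UL f)‖ + mu * ‖adjoint UK (UK f)‖ + gam * ‖UL f‖ := fun f => by
    rw [← Real.sqrt_sq (norm_nonneg (UL f)), hLB.norm_analysisOp_apply_sq]
    exact norm_sub_le_of_hasSum (hLB.hasSum_adjoint_apply f) (hKB.hasSum_adjoint_apply f)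
      (hL f).1.hasSum (hpert · f)
  have ha : 0 < A * ((1 - (lam + gam / √A)) / (1 + mu)) :=
    mul_pos hA (div_pos (by linarith [hmax.1]) (by linarith))
  intro f
  refine ⟨hKB.summable f, ?_, hKB.tsum_le f⟩
  rw [← hKB.norm_analysisOp_apply_sq]
  exact mul_norm_sq_le_norm_apply_sq ha
    (mul_norm_le_norm_adjoint_apply_of_perturbation hA hUL hmu hgam hmax.1 hlim) f

end Perturbation

section GFusion

variable {H : Type*} [NormedAddCommGroup H] [InnerProductSpace ℂ H] {J : Type*}
  {Hs : J → Type*} [∀ j, NormedAddCommGroup (Hs j)] [∀ j, InnerProductSpace ℂ (Hs j)]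
  (W : J → Submodule ℂ H) [∀ j, CompleteSpace (W j)] (v : J → ℝ) (Λ : ∀ j, H →L[ℂ] Hs j)

noncomputable def gfusionComponent (j : J) : H →L[ℂ] Hs j := (v j : ℂ) • (Λ j ∘L gfProj W j)

theorem norm_gfusionComponent_apply_sq (j : J) (f : H) :
    ‖gfusionComponent W v Λ j f‖ ^ 2 = v j ^ 2 * ‖Λ j (gfProj W j f)‖ ^ 2 := by
  simp [gfusionComponent, norm_smul, mul_pow]

theorem adjoint_gfusionComponent_apply [CompleteSpace H] [∀ j, CompleteSpace (Hs j)] (j : J)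
    (f : H) :
    adjoint (gfusionComponent W v Λ j) (gfusionComponent W v Λ j f) =
      ((v j) ^ 2 : ℝ) • gfProj W j (adjoint (Λ j) (Λ j (gfProj W j f))) := by
  have hP : adjoint (gfProj W j) = gfProj W j := isSelfAdjoint_starProjection (W j)
  rw [gfusionComponent, LinearIsometryEquiv.map_smulₛₗ, adjoint_comp, hP]
  simp [smul_smul, sq]

end GFusion

theorem gfusion_frame_perturbation_general
    {H : Type*} [NormedAddCommGroup H] [InnerProductSpace ℂ H] [CompleteSpace H]
    {J : Type*}
    {Hs : J → Type*} [∀ j, NormedAddCommGroup (Hs j)] [∀ j, InnerProductSpace ℂ (Hs j)]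
    [∀ j, CompleteSpace (Hs j)]
    (W : J → Submodule ℂ H) [∀ j, CompleteSpace (W j)]
    (v : J → ℝ)
    (Λ : ∀ j, H →L[ℂ] Hs j) (Θ : ∀ j, H →L[ℂ] Hs j)
    (A B : ℝ) (hA : 0 < A) (hAB : A ≤ B)
    (hframe : ∀ f : H,
        Summable (fun j => (v j) ^ 2 * ‖Λ j (gfProj W j f)‖ ^ 2) ∧
        A * ‖f‖ ^ 2 ≤ ∑' j, (v j) ^ 2 * ‖Λ j (gfProj W j f)‖ ^ 2 ∧
        ∑' j, (v j) ^ 2 * ‖Λ j (gfProj W j f)‖ ^ 2 ≤ B * ‖f‖ ^ 2)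
    (lam mu gam : ℝ) (hlam : 0 ≤ lam) (hmu : 0 ≤ mu) (hgam : 0 ≤ gam)
    (hmax : lam + gam / Real.sqrt A < 1 ∧ mu < 1)
    (hpert : ∀ (I : Finset J) (f : H),
        ‖∑ j ∈ I, ((v j) ^ 2 : ℝ) •
            (gfProj W j (adjoint (Λ j) (Λ j (gfProj W j f))) -
             gfProj W j (adjoint (Θ j) (Θ j (gfProj W j f))))‖ ≤
          lam * ‖∑ j ∈ I, ((v j) ^ 2 : ℝ) •
              gfProj W j (adjoint (Λ j) (Λ j (gfProj W j f)))‖ +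
          mu * ‖∑ j ∈ I, ((v j) ^ 2 : ℝ) •
              gfProj W j (adjoint (Θ j) (Θ j (gfProj W j f)))‖ +
          gam * Real.sqrt (∑ j ∈ I, (v j) ^ 2 * ‖Λ j (gfProj W j f)‖ ^ 2)) :
    ∀ f : H,
      Summable (fun j => (v j) ^ 2 * ‖Θ j (gfProj W j f)‖ ^ 2) ∧
      A * ((1 - (lam + gam / Real.sqrt A)) / (1 + mu)) * ‖f‖ ^ 2 ≤
        ∑' j, (v j) ^ 2 * ‖Θ j (gfProj W j f)‖ ^ 2 ∧
      ∑' j, (v j) ^ 2 * ‖Θ j (gfProj W j f)‖ ^ 2 ≤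
        B * ((1 + lam + gam / Real.sqrt B) / (1 - mu)) * ‖f‖ ^ 2 := by
  have hframe' : IsGFrame (gfusionComponent W v Λ) A B := by
    simpa only [IsGFrame, norm_gfusionComponent_apply_sq] using hframe
  have hΘ := hframe'.of_perturbation (K := gfusionComponent W v Θ) hA hAB hlam hmu hgam hmax
    fun s f => by
      simpa only [adjoint_gfusionComponent_apply, norm_gfusionComponent_apply_sq, smul_sub]
        using hpert s f
  simpa only [IsGFrame, norm_gfusionComponent_apply_sq] using hΘ

/-- perturbation: if `Λ` is a g-fusion frame with bounds `A, B` and `Θ_j`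
satisfy the stated finite-sum perturbation inequality with `max{λ + γ/√A, μ} < 1`, then
`Θ = (W_j, Θ_j, v_j)` is a g-fusion frame with bounds
`A(1 − (λ + γ/√A))/(1 + μ)` and `B(1 + λ + γ/√B)/(1 − μ)`. -/
theorem gfusion_frame_perturbation
    {H : Type*} [NormedAddCommGroup H] [InnerProductSpace ℂ H] [CompleteSpace H]
    {J : Type*} [Countable J]
    {Hs : J → Type*} [∀ j, NormedAddCommGroup (Hs j)] [∀ j, InnerProductSpace ℂ (Hs j)]
    [∀ j, CompleteSpace (Hs j)]
    (W : J → Submodule ℂ H) [∀ j, CompleteSpace (W j)]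
    (v : J → ℝ) (hv : ∀ j, 0 < v j)
    (Λ : ∀ j, H →L[ℂ] Hs j) (Θ : ∀ j, H →L[ℂ] Hs j)
    (A B : ℝ) (hA : 0 < A) (hAB : A ≤ B)
    (hframe : ∀ f : H,
        Summable (fun j => (v j) ^ 2 * ‖Λ j (gfProj W j f)‖ ^ 2) ∧
        A * ‖f‖ ^ 2 ≤ ∑' j, (v j) ^ 2 * ‖Λ j (gfProj W j f)‖ ^ 2 ∧
        ∑' j, (v j) ^ 2 * ‖Λ j (gfProj W j f)‖ ^ 2 ≤ B * ‖f‖ ^ 2)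
    (lam mu gam : ℝ) (hlam : 0 ≤ lam) (hmu : 0 ≤ mu) (hgam : 0 ≤ gam)
    (hmax : lam + gam / Real.sqrt A < 1 ∧ mu < 1)
    (hpert : ∀ (I : Finset J) (f : H),
        ‖∑ j ∈ I, ((v j) ^ 2 : ℝ) •
            (gfProj W j (adjoint (Λ j) (Λ j (gfProj W j f))) -
             gfProj W j (adjoint (Θ j) (Θ j (gfProj W j f))))‖ ≤
          lam * ‖∑ j ∈ I, ((v j) ^ 2 : ℝ) •
              gfProj W j (adjoint (Λ j) (Λ j (gfProj W j f)))‖ +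
          mu * ‖∑ j ∈ I, ((v j) ^ 2 : ℝ) •
              gfProj W j (adjoint (Θ j) (Θ j (gfProj W j f)))‖ +
          gam * Real.sqrt (∑ j ∈ I, (v j) ^ 2 * ‖Λ j (gfProj W j f)‖ ^ 2)) :
    ∀ f : H,
      Summable (fun j => (v j) ^ 2 * ‖Θ j (gfProj W j f)‖ ^ 2) ∧
      A * ((1 - (lam + gam / Real.sqrt A)) / (1 + mu)) * ‖f‖ ^ 2 ≤
        ∑' j, (v j) ^ 2 * ‖Θ j (gfProj W j f)‖ ^ 2 ∧
      ∑' j, (v j) ^ 2 * ‖Θ j (gfProj W j f)‖ ^ 2 ≤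
        B * ((1 + lam + gam / Real.sqrt B) / (1 - mu)) * ‖f‖ ^ 2 :=
  gfusion_frame_perturbation_general W v Λ Θ A B hA hAB hframe lam mu gam hlam hmu hgam hmax hpert
end
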